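/- Let c be a closure operator on the subsets of E with c(∅) = ∅ and let L ⊆ E. Define L₀ = E and L_{k+1} = g(L_k) if k is even, L_{k+1} = f(L_k) if k is odd, where f(X) = c(X ∖ L) and g(X) = c(X ∩ L). Then for every n > 0 the sequence L₁ ⊇ L₂ ⊇ ⋯ ⊇ Lₙ is an n-approximation of L, and it is better than every n-approximation of L by closed sets. -/
import Mathlib


/-- The partial alternating combination `S_j = F₁ − F₂ + ⋯ ± F_j`, evaluated
from left to right (the chain `F` is indexed from `0`, so `F i` is `F_{i+1}`). -/
def partialAlt {E : Type*} (F : ℕ → Set E) : ℕ → Set E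
  | 0 => ∅
  | j + 1 => if Even j then partialAlt F j ∪ F j else partialAlt F j \ F j

/-- `F₁ ⊇ ⋯ ⊇ Fₙ` is an `n`-approximation of `L` by `c`-closed sets. -/
def IsNApprox {E : Type*} (c : Set E → Set E) (L : Set E) (F : ℕ → Set E) (n : ℕ) : Prop :=
  (∀ i, i < n → c (F i) = F i) ∧ (∀ i j, i ≤ j → j < n → F j ⊆ F i) ∧
  (∀ k, 2 * k ≤ n → partialAlt F (2 * k) ⊆ L) ∧
  (∀ k, 2 * k + 1 ≤ n → L ⊆ partialAlt F (2 * k + 1))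

/-- The sequence `L₀ = E`, `L_{k+1} = g(L_k) = c(L_k ∩ L)` for even `k` and
`L_{k+1} = f(L_k) = c(L_k ∖ L)` for odd `k`. -/
def bestSeq {E : Type*} (c : Set E → Set E) (L : Set E) : ℕ → Set E
  | 0 => Set.univ
  | k + 1 => if Even k then c (bestSeq c L k ∩ L) else c (bestSeq c L k \ L)

section Aux

variable {E : Type*} (c : Set E → Set E) (L : Set E)

lemma partialAlt_odd (F : ℕ → Set E) (k : ℕ) :
    partialAlt F (2*k+1) = partialAlt F (2*k) ∪ F (2*k) := by
  rw [partialAlt]; simp [even_two_mul]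

lemma partialAlt_even (F : ℕ → Set E) (k : ℕ) :
    partialAlt F (2*k+2) = partialAlt F (2*k+1) \ F (2*k+1) := by
  rw [show 2*k+2 = (2*k+1)+1 from rfl, partialAlt]
  simp [Nat.even_add_one, even_two_mul]

lemma bestSeq_odd_eq (k : ℕ) :
    bestSeq c L (2*k+1) = c (bestSeq c L (2*k) ∩ L) := by
  rw [bestSeq]; simp [even_two_mul]

lemma bestSeq_even_eq (k : ℕ) :
    bestSeq c L (2*k+2) = c (bestSeq c L (2*k+1) \ L) := by
  rw [show 2*k+2 = (2*k+1)+1 from rfl, bestSeq]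
  simp [Nat.even_add_one, even_two_mul]

lemma bestSeq_closed (hidem : ∀ X, c (c X) = c X) (k : ℕ) :
    c (bestSeq c L (k+1)) = bestSeq c L (k+1) := by
  rw [bestSeq]; split <;> exact hidem _

lemma bestSeq_succ_subset (hidem : ∀ X, c (c X) = c X)
    (hiso : ∀ X Y, X ⊆ Y → c X ⊆ c Y) (k : ℕ) :
    bestSeq c L (k+2) ⊆ bestSeq c L (k+1) := by
  rw [show bestSeq c L (k+2)
      = if Even (k+1) then c (bestSeq c L (k+1) ∩ L) else c (bestSeq c L (k+1) \ L) from rfl]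
  have h := bestSeq_closed c L hidem k
  split
  · exact (hiso _ _ Set.inter_subset_left).trans h.subset
  · exact (hiso _ _ Set.diff_subset).trans h.subset

lemma bestSeq_anti (hidem : ∀ X, c (c X) = c X)
    (hiso : ∀ X Y, X ⊆ Y → c X ⊆ c Y) :
    Antitone (fun k => bestSeq c L (k+1)) :=
  antitone_nat_of_succ_le fun k => bestSeq_succ_subset c L hidem hiso k

/-- Key invariants for the canonical sequence. -/
lemma bestSeq_key (hext : ∀ X, X ⊆ c X) (k : ℕ) :
    partialAlt (fun i => bestSeq c L (i+1)) (2*k) ⊆ L ∧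
    L \ partialAlt (fun i => bestSeq c L (i+1)) (2*k) ⊆ bestSeq c L (2*k) := by
  set G : ℕ → Set E := fun i => bestSeq c L (i+1) with hG
  induction k with
  | zero =>
    constructor
    · rw [show 2*0 = 0 from rfl, partialAlt]; exact Set.empty_subset _
    · rw [show 2*0 = 0 from rfl, partialAlt, show bestSeq c L 0 = Set.univ from rfl]
      exact Set.subset_univ _
  | succ k ih =>
    obtain ⟨h1, h2⟩ := ih
    -- L ⊆ S (2k+1)
    have hodd : L ⊆ partialAlt G (2*k+1) := by
      rw [partialAlt_odd]
      intro x hx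
      by_cases hxs : x ∈ partialAlt G (2*k)
      · exact Or.inl hxs
      · refine Or.inr ?_
        have : x ∈ bestSeq c L (2*k) ∩ L := ⟨h2 ⟨hx, hxs⟩, hx⟩
        have : x ∈ c (bestSeq c L (2*k) ∩ L) := hext _ this
        rw [← bestSeq_odd_eq c L k] at this
        exact this
    have heq : partialAlt G (2*(k+1)) = partialAlt G (2*k+1) \ G (2*k+1) := by
      rw [show 2*(k+1) = 2*k+2 by ring, partialAlt_even]
    constructor
    · rw [heq]
      rintro x ⟨hx1, hx2⟩
      by_contra hxL
      apply hx2
      have hx1' : x ∈ bestSeq c L (2*k+1) := by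
        rw [partialAlt_odd] at hx1
        rcases hx1 with h | h
        · exact absurd (h1 h) hxL
        · exact h
      have : x ∈ c (bestSeq c L (2*k+1) \ L) := hext _ ⟨hx1', hxL⟩
      rw [← bestSeq_even_eq c L k] at this
      exact this
    · rw [heq]
      intro x hx
      have hx1 : x ∈ partialAlt G (2*k+1) := hodd hx.1
      have : x ∈ G (2*k+1) := by
        by_contra h
        exact hx.2 ⟨hx1, h⟩
      exact this

lemma bestSeq_even_subset (hext : ∀ X, X ⊆ c X) (k : ℕ) :
    partialAlt (fun i => bestSeq c L (i+1)) (2*k) ⊆ L :=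
  (bestSeq_key c L hext k).1

lemma bestSeq_odd_superset (hext : ∀ X, X ⊆ c X) (k : ℕ) :
    L ⊆ partialAlt (fun i => bestSeq c L (i+1)) (2*k+1) := by
  rw [partialAlt_odd]
  intro x hx
  by_cases hxs : x ∈ partialAlt (fun i => bestSeq c L (i+1)) (2*k)
  · exact Or.inl hxs
  · refine Or.inr ?_
    have : x ∈ c (bestSeq c L (2*k) ∩ L) :=
      hext _ ⟨(bestSeq_key c L hext k).2 ⟨hx, hxs⟩, hx⟩
    rw [← bestSeq_odd_eq c L k] at this
    exact this

/-- The invariant `L_{j+1} ⊆ F_j` against any `n`-approximation. -/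
lemma bestSeq_subset_approx (hidem : ∀ X, c (c X) = c X)
    (hiso : ∀ X Y, X ⊆ Y → c X ⊆ c Y)
    (F : ℕ → Set E) (n : ℕ) (hF : IsNApprox c L F n) :
    ∀ j, j < n → bestSeq c L (j+1) ⊆ F j := by
  obtain ⟨hcl, hmono, heven, hodd⟩ := hF
  intro j
  induction j with
  | zero =>
    intro h0
    have hL : L ⊆ F 0 := by
      have := hodd 0 (by omega)
      rwa [partialAlt_odd, show partialAlt F (2*0) = ∅ from rfl, Set.empty_union,
        show 2*0 = 0 from rfl] at this
    have : bestSeq c L 1 = c (Set.univ ∩ L) := by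
      rw [bestSeq]; simp [show bestSeq c L 0 = Set.univ from rfl]
    rw [this, Set.univ_inter]
    exact (hiso _ _ hL).trans (hcl 0 h0).subset
  | succ j ihj =>
    intro hjn
    have hj : bestSeq c L (j+1) ⊆ F j := ihj (by omega)
    rcases Nat.even_or_odd j with ⟨k, hk⟩ | ⟨k, hk⟩
    · -- j = 2k : L_{2k+2} = c(L_{2k+1} \ L) ⊆ c(F 2k \ L) ⊆ F (2k+1)
      subst hk
      have hsub : F (k+k) \ L ⊆ F (k+k+1) := by
        intro x ⟨hx1, hx2⟩
        by_contra hx3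
        apply hx2
        apply heven (k+1) (by omega)
        rw [show 2*(k+1) = 2*k+2 by ring, partialAlt_even, partialAlt_odd]
        exact ⟨Or.inr (by rw [two_mul]; exact hx1), by rw [two_mul]; exact hx3⟩
      have : bestSeq c L (k+k+2) = c (bestSeq c L (k+k+1) \ L) := by
        rw [show k+k+2 = 2*k+2 by ring, show k+k+1 = 2*k+1 by ring, bestSeq_even_eq]
      rw [this]
      refine (hiso _ _ ?_).trans ((hiso _ _ hsub).trans (hcl (k+k+1) hjn).subset)
      exact Set.diff_subset_diff_left hj
    · -- j = 2k+1 : L_{2k+3} = c(L_{2k+2} ∩ L) ⊆ c(F (2k+1) ∩ L) ⊆ F (2k+2)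
      subst hk
      have hsub : F (2*k+1) ∩ L ⊆ F (2*k+2) := by
        intro x ⟨hx1, hx2⟩
        have := hodd (k+1) (by omega)
        rw [show 2*(k+1)+1 = (2*k+2)+1 by ring] at this
        have hx3 := this hx2
        rw [show (2*k+2)+1 = 2*(k+1)+1 by ring, partialAlt_odd,
          show 2*(k+1) = 2*k+2 by ring, partialAlt_even] at hx3
        rcases hx3 with ⟨_, h⟩ | h
        · exact absurd hx1 h
        · exact h
      have : bestSeq c L (2*k+1+2) = c (bestSeq c L (2*k+2) ∩ L) := by
        rw [show 2*k+1+2 = 2*(k+1)+1 by ring, bestSeq_odd_eq,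
          show 2*(k+1) = 2*k+2 by ring]
      rw [this]
      refine (hiso _ _ ?_).trans ((hiso _ _ hsub).trans (hcl (2*k+2) (by omega)).subset)
      exact Set.inter_subset_inter_left _ hj

end Aux

/-- For every `n > 0`, the sequence `L₁ ⊇ ⋯ ⊇ Lₙ` defined from `L₀ = E` by
`L_{k+1} = g(L_k)` (`k` even) and `L_{k+1} = f(L_k)` (`k` odd) is an
`n`-approximation of `L`, and it is better than every `n`-approximation of `L`
by closed sets. -/
theorem bestSeq_is_best_approx {E : Type*} (c : Set E → Set E)
    (hext : ∀ X, X ⊆ c X) (hidem : ∀ X, c (c X) = c X)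
    (hiso : ∀ X Y, X ⊆ Y → c X ⊆ c Y) (hbot : c ∅ = ∅)
    (L : Set E) (n : ℕ) (hn : 0 < n) :
    IsNApprox c L (fun i => bestSeq c L (i + 1)) n ∧
    ∀ F : ℕ → Set E, IsNApprox c L F n →
      (∀ k, 2 * k + 1 ≤ n →
        partialAlt (fun i => bestSeq c L (i + 1)) (2 * k + 1) ⊆ partialAlt F (2 * k + 1)) ∧
      (∀ k, 2 * k ≤ n →
        partialAlt F (2 * k) ⊆ partialAlt (fun i => bestSeq c L (i + 1)) (2 * k)) := by
  constructor
  · refine ⟨fun i _ => bestSeq_closed c L hidem i,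
      fun i j hij _ => bestSeq_anti c L hidem hiso hij,
      fun k _ => bestSeq_even_subset c L hext k,
      fun k _ => bestSeq_odd_superset c L hext k⟩
  · intro F hF
    have hkey := bestSeq_subset_approx c L hidem hiso F n hF
    obtain ⟨hcl, hmono, heven, hodd⟩ := hF
    constructor
    · intro k hk
      rw [partialAlt_odd]
      refine Set.union_subset ?_ ?_
      · exact (bestSeq_even_subset c L hext k).trans (hodd k hk)
      · exact (hkey (2*k) (by omega)).trans (by rw [partialAlt_odd]; exact Set.subset_union_right)
    · intro k hk
      match k with
      | 0 => rw [show 2*0 = 0 from rfl, partialAlt, partialAlt]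
      | k+1 =>
        rw [show 2*(k+1) = 2*k+2 by ring, partialAlt_even, partialAlt_even]
        intro x ⟨hx1, hx2⟩
        refine ⟨?_, ?_⟩
        · have hxL : x ∈ L := by
            apply heven (k+1) hk
            rw [show 2*(k+1) = 2*k+2 by ring, partialAlt_even]
            exact ⟨hx1, hx2⟩
          exact bestSeq_odd_superset c L hext k hxL
        · intro hx3
          exact hx2 (hkey (2*k+1) (by omega) hx3)
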